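/- arXiv:dg-ga/9605003 — 3 statements merged into one kernel-verified Lean document; each statement's English description precedes it below -/
import Mathlib

section
/- Let $P$ be a compact Poisson manifold equipped with a finite measure $\nu$ invariant under all Hamiltonian flows. Then the pairing $\langle[\theta_1],[\theta_2]\rangle = \int_P \pi(\theta_1,\theta_2)\,d\nu$ on first de Rham cohomology is well-defined: its value depends only on the cohomology classes of the closed one-forms $\theta_1,\theta_2$, and it is bilinear and skew-symmetric. -/
/-- An abstract model of the Cartan calculus of a Poisson manifold `P`.
Here `F` plays the role of the algebra `C^∞(P)` of smooth functions, `V` of the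
`C^∞(P)`-module of vector fields, and `Ω1`, `Ω2` of the spaces of differential
1- and 2-forms.  The fields record the standard operations of differential
calculus (action of vector fields on functions, Lie bracket of vector fields,
exterior derivative, pairing of forms and vector fields, interior product, Lie
derivative via Cartan's magic formula) together with their standard identities,
and the data of a Poisson bivector `π` through its induced bundle map
`sharp = π^♯` (so that `π(ω,θ) = ⟨π^♯ω, θ⟩`), the antisymmetry of `π`, the
Jacobi identity for the Poisson bracket `{f,g} = π(df,dg)`, and the fact that
`π^♯` intertwines hamiltonian one-forms with hamiltonian vector fields. -/
structure PoissonCalc (F V Ω1 Ω2 : Type*) [CommRing F] [Algebra ℝ F]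
    [AddCommGroup V] [Module F V]
    [AddCommGroup Ω1] [Module ℝ Ω1] [Module F Ω1]
    [AddCommGroup Ω2] [Module ℝ Ω2] where
  /-- action of a vector field on a function, `X(f)` -/
  act : V → F → F
  act_add : ∀ X f g, act X (f + g) = act X f + act X g
  act_mul : ∀ X f g, act X (f * g) = f * act X g + g * act X f
  act_addV : ∀ X Y f, act (X + Y) f = act X f + act Y f
  act_smulV : ∀ (f : F) (X : V) (g : F), act (f • X) g = f * act X g
  /-- Lie bracket of vector fields -/
  lieV : V → V → V
  act_lieV : ∀ X Y f, act (lieV X Y) f = act X (act Y f) - act Y (act X f)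
  /-- exterior derivative on functions -/
  d0 : F →ₗ[ℝ] Ω1
  d0_const : ∀ c : ℝ, d0 (algebraMap ℝ F c) = 0
  /-- exterior derivative on one-forms -/
  d1 : Ω1 →ₗ[ℝ] Ω2
  d1_d0 : ∀ f, d1 (d0 f) = 0
  /-- evaluation of a one-form on a vector field, `ω(X)` -/
  pair : V → Ω1 → F
  pair_addV : ∀ X Y ω, pair (X + Y) ω = pair X ω + pair Y ω
  pair_add : ∀ X ω θ, pair X (ω + θ) = pair X ω + pair X θ
  pair_smulV : ∀ (f : F) (X : V) (ω : Ω1), pair (f • X) ω = f * pair X ω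
  pair_smul : ∀ (X : V) (f : F) (ω : Ω1), pair X (f • ω) = f * pair X ω
  pair_d0 : ∀ X f, pair X (d0 f) = act X f
  /-- interior product of a vector field with a two-form -/
  ι2 : V → Ω2 → Ω1
  /-- Lie derivative of one-forms -/
  L : V → Ω1 → Ω1
  /-- Cartan's magic formula `L_X = ι_X d + d ι_X` -/
  cartan : ∀ X ω, L X ω = ι2 X (d1 ω) + d0 (pair X ω)
  L_lieV : ∀ X Y ω, L (lieV X Y) ω = L X (L Y ω) - L Y (L X ω)
  L_pair : ∀ X Y ω, act X (pair Y ω) = pair Y (L X ω) + pair (lieV X Y) ω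
  L_smul : ∀ (X : V) (f : F) (ω : Ω1), L X (f • ω) = f • L X ω + act X f • ω
  /-- one-forms are generated over functions by exact one-forms -/
  span_exact : ∀ ω : Ω1, ω ∈ Submodule.span F (Set.range d0)
  /-- the bundle map `π^♯ : T^*P → TP` induced by the Poisson bivector -/
  sharp : Ω1 → V
  sharp_add : ∀ ω θ, sharp (ω + θ) = sharp ω + sharp θ
  sharp_smul : ∀ (f : F) (ω : Ω1), sharp (f • ω) = f • sharp ω
  /-- antisymmetry of the Poisson bivector: `π(ω,θ) = -π(θ,ω)` -/
  pair_sharp_skew : ∀ ω θ, pair (sharp ω) θ = - (pair (sharp θ) ω)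
  /-- the Jacobi identity for the Poisson bracket `{f,g} = π(df,dg)` -/
  jacobi : ∀ f g h : F,
    pair (sharp (d0 f)) (d0 (pair (sharp (d0 g)) (d0 h))) =
      pair (sharp (d0 (pair (sharp (d0 f)) (d0 g)))) (d0 h) +
      pair (sharp (d0 g)) (d0 (pair (sharp (d0 f)) (d0 h)))
  /-- `π^♯ d{f,g} = [π^♯ df, π^♯ dg]`, i.e. `X_{{f,g}} = [X_f, X_g]` -/
  sharp_hamiltonian : ∀ f g : F,
    sharp (d0 (pair (sharp (d0 f)) (d0 g))) = lieV (sharp (d0 f)) (sharp (d0 g))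

namespace PoissonCalc

variable {F V Ω1 Ω2 : Type*} [CommRing F] [Algebra ℝ F]
    [AddCommGroup V] [Module F V]
    [AddCommGroup Ω1] [Module ℝ Ω1] [Module F Ω1]
    [AddCommGroup Ω2] [Module ℝ Ω2]
variable (C : PoissonCalc F V Ω1 Ω2)

/-- The Poisson bivector evaluated on two one-forms: `π(ω,θ) = ⟨π^♯ω, θ⟩`. -/
def piv (ω θ : Ω1) : F := C.pair (C.sharp ω) θ

/-- The bracket of one-forms on a Poisson manifold:
`[ω,θ] = L_{X_ω}θ - L_{X_θ}ω - d(π(ω,θ))`, where `X_ω = π^♯ω`. -/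
def kbr (ω θ : Ω1) : Ω1 :=
  C.L (C.sharp ω) θ - C.L (C.sharp θ) ω - C.d0 (C.piv ω θ)

end PoissonCalc

/-! Pairing a closed form with an exact form `df` gives `π(θ, df) = X_θ(f)`, whose integral vanishes
by invariance of the measure; by skew-symmetry the same holds with the arguments swapped. Hence
changing `θ₁, θ₂` by exact forms does not change `∫ π(θ₁, θ₂)`. Bilinearity and skew-symmetry are
inherited pointwise from the bivector. -/

namespace PoissonCalc

variable {F V Ω1 Ω2 : Type*} [CommRing F] [Algebra ℝ F]
    [AddCommGroup V] [Module F V]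
    [AddCommGroup Ω1] [Module ℝ Ω1] [Module F Ω1]
    [AddCommGroup Ω2] [Module ℝ Ω2]
variable (C : PoissonCalc F V Ω1 Ω2)

theorem piv_add_left (ω ω' θ : Ω1) : C.piv (ω + ω') θ = C.piv ω θ + C.piv ω' θ := by
  simp only [piv, C.sharp_add, C.pair_addV]

theorem piv_add_right (ω θ θ' : Ω1) : C.piv ω (θ + θ') = C.piv ω θ + C.piv ω θ' :=
  C.pair_add _ _ _

theorem piv_skew (ω θ : Ω1) : C.piv ω θ = -C.piv θ ω :=
  C.pair_sharp_skew ω θ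

theorem piv_smul_left [IsScalarTower ℝ F Ω1] (c : ℝ) (ω θ : Ω1) :
    C.piv (c • ω) θ = c • C.piv ω θ := by
  rw [piv, ← algebraMap_smul F c ω, C.sharp_smul, C.pair_smulV, Algebra.smul_def, piv]

theorem piv_smul_right [IsScalarTower ℝ F Ω1] (c : ℝ) (ω θ : Ω1) :
    C.piv ω (c • θ) = c • C.piv ω θ := by
  rw [piv_skew, piv_smul_left, piv_skew C θ, smul_neg, neg_neg]

theorem piv_d0_right (ω : Ω1) (f : F) : C.piv ω (C.d0 f) = C.act (C.sharp ω) f :=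
  C.pair_d0 _ _

/-- `I` models integration against a measure `ν`; invariance of `ν` under the flows of the
hamiltonian vector fields of closed one-forms is stated infinitesimally. -/
def IsHamiltonianInvariant (I : F →ₗ[ℝ] ℝ) : Prop :=
  ∀ θ : Ω1, C.d1 θ = 0 → ∀ f : F, I (C.act (C.sharp θ) f) = 0

variable {C} {I : F →ₗ[ℝ] ℝ}

theorem IsHamiltonianInvariant.integral_piv_d0_right (hI : C.IsHamiltonianInvariant I)
    {θ : Ω1} (hθ : C.d1 θ = 0) (f : F) : I (C.piv θ (C.d0 f)) = 0 := by
  rw [piv_d0_right, hI θ hθ f]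

theorem IsHamiltonianInvariant.integral_piv_d0_left (hI : C.IsHamiltonianInvariant I)
    {θ : Ω1} (hθ : C.d1 θ = 0) (f : F) : I (C.piv (C.d0 f) θ) = 0 := by
  rw [piv_skew, map_neg, hI.integral_piv_d0_right hθ f, neg_zero]

theorem IsHamiltonianInvariant.integral_piv_add_d0 (hI : C.IsHamiltonianInvariant I)
    {θ₁ θ₂ : Ω1} (h₁ : C.d1 θ₁ = 0) (h₂ : C.d1 θ₂ = 0) (f g : F) :
    I (C.piv (θ₁ + C.d0 f) (θ₂ + C.d0 g)) = I (C.piv θ₁ θ₂) := by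
  simp only [piv_add_left, piv_add_right, map_add, hI.integral_piv_d0_right h₁,
    hI.integral_piv_d0_left h₂, hI.integral_piv_d0_right (C.d1_d0 f), add_zero]

end PoissonCalc

/-- Let `P` be a compact Poisson manifold equipped with a
finite measure `ν` invariant under all hamiltonian flows; `I f = ∫_P f dν`
denotes integration against `ν`, and invariance is expressed
infinitesimally: `∫_P X_θ(f) dν = 0` for every closed one-form `θ` and
every function `f` (the flow of `X_θ = π^♯θ` preserves `ν`).  Then the
pairing `⟨[θ₁],[θ₂]⟩ = ∫_P π(θ₁,θ₂) dν` on first de Rham cohomology is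
well defined (it depends only on the cohomology classes of the closed
one-forms `θ₁, θ₂`), bilinear, and skew-symmetric. -/
theorem invariant_measure_pairing
    {F V Ω1 Ω2 : Type*} [CommRing F] [Algebra ℝ F]
    [AddCommGroup V] [Module F V]
    [AddCommGroup Ω1] [Module ℝ Ω1] [Module F Ω1]
    [AddCommGroup Ω2] [Module ℝ Ω2] [IsScalarTower ℝ F Ω1]
    (C : PoissonCalc F V Ω1 Ω2)
    (I : F →ₗ[ℝ] ℝ)
    (hinv : ∀ θ : Ω1, C.d1 θ = 0 → ∀ f : F, I (C.act (C.sharp θ) f) = 0) :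
    -- well defined on cohomology classes
    (∀ θ₁ θ₁' θ₂ θ₂' : Ω1, C.d1 θ₁ = 0 → C.d1 θ₁' = 0 → C.d1 θ₂ = 0 →
      C.d1 θ₂' = 0 → θ₁ - θ₁' ∈ Set.range C.d0 → θ₂ - θ₂' ∈ Set.range C.d0 →
      I (C.piv θ₁ θ₂) = I (C.piv θ₁' θ₂'))
    -- additive in each argument
    ∧ (∀ θ₁ θ₁' θ₂ : Ω1, I (C.piv (θ₁ + θ₁') θ₂) =
        I (C.piv θ₁ θ₂) + I (C.piv θ₁' θ₂))
    ∧ (∀ θ₁ θ₂ θ₂' : Ω1, I (C.piv θ₁ (θ₂ + θ₂')) =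
        I (C.piv θ₁ θ₂) + I (C.piv θ₁ θ₂'))
    -- homogeneous in each argument
    ∧ (∀ (c : ℝ) (θ₁ θ₂ : Ω1), I (C.piv (c • θ₁) θ₂) = c * I (C.piv θ₁ θ₂))
    ∧ (∀ (c : ℝ) (θ₁ θ₂ : Ω1), I (C.piv θ₁ (c • θ₂)) = c * I (C.piv θ₁ θ₂))
    -- skew-symmetric
    ∧ (∀ θ₁ θ₂ : Ω1, I (C.piv θ₁ θ₂) = - I (C.piv θ₂ θ₁)) := by
  have hI : C.IsHamiltonianInvariant I := hinv
  refine ⟨?_, fun _ _ _ => ?_, fun _ _ _ => ?_, fun _ _ _ => ?_, fun _ _ _ => ?_,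
    fun _ _ => ?_⟩
  · rintro θ₁ θ₁' θ₂ θ₂' - h₁' - h₂' ⟨f, hf⟩ ⟨g, hg⟩
    rw [← hI.integral_piv_add_d0 h₁' h₂' f g, hf, hg, add_sub_cancel, add_sub_cancel]
  · rw [C.piv_add_left, map_add]
  · rw [C.piv_add_right, map_add]
  · rw [C.piv_smul_left, map_smul, smul_eq_mul]
  · rw [C.piv_smul_right, map_smul, smul_eq_mul]
  · rw [C.piv_skew, map_neg]
end

section
/- Let $E \to \Gamma$ be the prequantum circle bundle with connection form $\theta$ over a symplectic groupoid $\Gamma \rightrightarrows P$, with its induced groupoid structure $E \rightrightarrows P$. A bisection $K$ of $E$ is Legendrian (i.e., horizontal with respect to $\theta$) if and only if the left translation $l_K: E \to E$ is a contact diffeomorphism, i.e., $l_K^*\theta = \theta$. -/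
/-- Pointwise model: `VE` and `VP` are the (trivialised) tangent spaces of `E` and `P`, and the
bisection is recorded by its section `K : P → E` of the source map `α`. Since
`l_K x = K (α x) · x`, the curve `(K (α x(t)), x(t), l_K x(t))` lies in the graph of the
multiplication, which is what `hgraph` evaluates `(θ, θ, -θ)` on. -/
theorem legendrian_iff_contact_general
    {E P VE VP : Type*}
    [AddCommGroup VE] [Module ℝ VE] [AddCommGroup VP] [Module ℝ VP]
    (θ : E → VE →ₗ[ℝ] ℝ)
    (α : E → P)
    (K : P → E)                 -- the bisection, as a section of α
    (dK : ∀ u : P, VP →ₗ[ℝ] VE)  -- differential of K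
    (dα : ∀ x : E, VE →ₗ[ℝ] VP)  -- differential of α
    (lK : E → E)                 -- left translation by K, x ↦ K(α x)·x
    (dl : ∀ x : E, VE →ₗ[ℝ] VE)  -- differential of l_K
    -- the graph of multiplication annihilates (θ, θ, -θ):
    (hgraph : ∀ (x : E) (v : VE),
      θ (K (α x)) (dK (α x) (dα x v)) + θ x v - θ (lK x) (dl x v) = 0)
    -- α is surjective and a submersion
    (hαsurj : Function.Surjective α)
    (hdαsurj : ∀ x : E, Function.Surjective (dα x)) :
    -- K is Legendrian (θ vanishes on the tangent spaces of K) iff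
    -- l_K is a contact diffeomorphism (l_K^* θ = θ)
    ((∀ (u : P) (w : VP), θ (K u) (dK u w) = 0) ↔
      (∀ (x : E) (v : VE), θ (lK x) (dl x v) = θ x v)) := by
  -- `l_K^* θ = θ + α^* (K^* θ)`, so `l_K` is contact iff `α^* (K^* θ) = 0`, and pulling back
  -- along the surjective submersion `α` is injective.
  have pullback_lK : ∀ x v, θ (lK x) (dl x v) = θ x v + θ (K (α x)) (dK (α x) (dα x v)) :=
    fun x v => by linarith [hgraph x v]
  simp only [pullback_lK, add_eq_left]
  rw [hαsurj.forall]
  exact forall_congr' fun x => (hdαsurj x).forall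

/-- Let `E → Γ` be the prequantum circle bundle with
connection form `θ` over a symplectic groupoid `Γ ⇉ P`, with its induced
groupoid structure `E ⇉ P`.  A bisection `K` of `E` is Legendrian (i.e.
horizontal with respect to `θ`) if and only if the left translation
`l_K : E → E` is a contact diffeomorphism, i.e. `l_K^* θ = θ`.

Pointwise model: `VE` and `VP` are the (trivialised) tangent spaces of `E`
and `P`; `θ x : VE → ℝ` is the connection form at `x ∈ E`; the bisection is
recorded by its section `K : P → E` of the source map `α`, with differential
`dK u : VP → VE` (so the tangent spaces to the bisection are the images of
`dK`); `lK` is the left translation `x ↦ K(α(x))·x` with differential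
`dl x : VE → VE`; `hgraph` records that the graph of the multiplication of
`E` annihilates the one-form `(θ, θ, -θ)` (applied to the curve
`(K(α(x(t))), x(t), l_K(x(t)))` in the graph); and `α` is a surjective
submersion. -/
theorem legendrian_iff_contact
    {E P VE VP : Type*}
    [AddCommGroup VE] [Module ℝ VE] [AddCommGroup VP] [Module ℝ VP]
    (θ : E → VE →ₗ[ℝ] ℝ)
    (α : E → P)
    (K : P → E)                 -- the bisection, as a section of α
    (hK : ∀ u, α (K u) = u)
    (dK : ∀ u : P, VP →ₗ[ℝ] VE)  -- differential of K
    (dα : ∀ x : E, VE →ₗ[ℝ] VP)  -- differential of α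
    (lK : E → E)                 -- left translation by K, x ↦ K(α x)·x
    (dl : ∀ x : E, VE →ₗ[ℝ] VE)  -- differential of l_K
    -- the graph of multiplication annihilates (θ, θ, -θ):
    (hgraph : ∀ (x : E) (v : VE),
      θ (K (α x)) (dK (α x) (dα x v)) + θ x v - θ (lK x) (dl x v) = 0)
    -- α is surjective and a submersion
    (hαsurj : Function.Surjective α)
    (hdαsurj : ∀ x : E, Function.Surjective (dα x)) :
    -- K is Legendrian (θ vanishes on the tangent spaces of K) iff
    -- l_K is a contact diffeomorphism (l_K^* θ = θ)
    ((∀ (u : P) (w : VP), θ (K u) (dK u w) = 0) ↔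
      (∀ (x : E) (v : VE), θ (lK x) (dl x v) = θ x v)) :=
  legendrian_iff_contact_general θ α K dK dα lK dl hgraph hαsurj hdαsurj
end

section
/- Let $P$ be a compact Poisson manifold with prequantizable symplectic groupoid $\Gamma$, and $E \rightrightarrows P$ the prequantum groupoid. The Lie algebra of the group $U_0(E)$ of Legendrian bisections of $E$ is isomorphic to the Poisson algebra $C^\infty(P)$: explicitly, sections of the Lie algebroid $\tilde{A} = T^*P \oplus (P\times\mathbb{R})$ with bracket $[(\zeta,f),(\eta,g)] = ([\zeta,\eta], (\pi^\#\zeta)g - (\pi^\#\eta)f + \pi(\zeta,\eta))$ of the form $(-df, f)$ constitute a Lie subalgebra, and the map $(-df,f) \mapsto -f$ is a Lie algebra isomorphism onto $(C^\infty(P), \{\cdot,\cdot\})$. -/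
namespace PoissonCalc

variable {F V Ω1 Ω2 : Type*} [CommRing F] [Algebra ℝ F]
    [AddCommGroup V] [Module F V]
    [AddCommGroup Ω1] [Module ℝ Ω1] [Module F Ω1]
    [AddCommGroup Ω2] [Module ℝ Ω2]
variable (C : PoissonCalc F V Ω1 Ω2)

/-- The Poisson bracket `{f,g} = π(df,dg)`. -/
def pbr (f g : F) : F := C.piv (C.d0 f) (C.d0 g)

/-- The bracket on sections of the central extension
`Ã = T^*P ⊕ (P×ℝ)` of the cotangent Lie algebroid by the Poisson tensor
`π` viewed as a Lie algebroid 2-cocycle: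
`[(ζ,f),(η,g)] = ([ζ,η], (π^♯ζ)g - (π^♯η)f + π(ζ,η))`. -/
def extBr (p q : Ω1 × F) : Ω1 × F :=
  (C.kbr p.1 q.1,
    C.act (C.sharp p.1) q.2 - C.act (C.sharp q.1) p.2 + C.piv p.1 q.1)

end PoissonCalc

/-! Cartan's formula together with `d ∘ d = 0` gives `L_{X_f} dg = d(X_f g) = d{f,g}`, so the
Koszul bracket of exact forms is `[df, dg] = d{f,g}`, and the antisymmetry of `π` collapses the
second component of `[(-df,f),(-dg,g)]` to `-{f,g}`. -/

namespace PoissonCalc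

variable {F V Ω1 Ω2 : Type*} [CommRing F] [Algebra ℝ F]
    [AddCommGroup V] [Module F V]
    [AddCommGroup Ω1] [Module ℝ Ω1] [Module F Ω1]
    [AddCommGroup Ω2] [Module ℝ Ω2]
variable (C : PoissonCalc F V Ω1 Ω2)

lemma pair_zero (X : V) : C.pair X 0 = 0 :=
  (AddMonoidHom.mk' (C.pair X) (C.pair_add X)).map_zero

lemma pair_neg (X : V) (ω : Ω1) : C.pair X (-ω) = -C.pair X ω :=
  (AddMonoidHom.mk' (C.pair X) (C.pair_add X)).map_neg ω

lemma pair_negV (X : V) (ω : Ω1) : C.pair (-X) ω = -C.pair X ω :=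
  (AddMonoidHom.mk' (C.pair · ω) (C.pair_addV · · ω)).map_neg X

lemma sharp_neg (ω : Ω1) : C.sharp (-ω) = -C.sharp ω :=
  (AddMonoidHom.mk' C.sharp C.sharp_add).map_neg ω

lemma L_zero (X : V) : C.L X 0 = 0 := by
  simpa using C.L_smul X 0 0

lemma ι2_zero (X : V) : C.ι2 X 0 = 0 := by
  simpa [L_zero, pair_zero] using (C.cartan X 0).symm

lemma L_d0 (X : V) (g : F) : C.L X (C.d0 g) = C.d0 (C.act X g) := by
  rw [C.cartan, C.d1_d0, C.ι2_zero, C.pair_d0, zero_add]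

lemma act_sharp_d0 (f g : F) : C.act (C.sharp (C.d0 f)) g = C.pbr f g :=
  (C.pair_d0 _ g).symm

lemma piv_d0 (f g : F) : C.piv (C.d0 f) (C.d0 g) = C.pbr f g := rfl

lemma pbr_skew (f g : F) : C.pbr g f = -C.pbr f g :=
  C.pair_sharp_skew _ _

lemma pbr_neg_left (f g : F) : C.pbr (-f) g = -C.pbr f g := by
  rw [pbr, piv, map_neg, sharp_neg, pair_negV, ← piv, ← pbr]

lemma pbr_neg_right (f g : F) : C.pbr f (-g) = -C.pbr f g := by
  rw [pbr, piv, map_neg, pair_neg, ← piv, ← pbr]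

lemma pbr_neg_neg (f g : F) : C.pbr (-f) (-g) = C.pbr f g := by
  rw [pbr_neg_left, pbr_neg_right, neg_neg]

lemma kbr_d0 (f g : F) : C.kbr (C.d0 f) (C.d0 g) = C.d0 (C.pbr f g) := by
  rw [kbr, L_d0, L_d0, act_sharp_d0, act_sharp_d0, ← pbr, pbr_skew, map_neg]
  abel

lemma extBr_neg_d0 (f g : F) :
    C.extBr (-(C.d0 f), f) (-(C.d0 g), g) =
      (-(C.d0 (-(C.pbr f g))), -(C.pbr f g)) := by
  rw [← map_neg C.d0 f, ← map_neg C.d0 g]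
  simp only [extBr, kbr_d0, act_sharp_d0, piv_d0, pbr_neg_neg, Prod.mk.injEq]
  constructor
  · rw [map_neg, neg_neg]
  · rw [pbr_neg_left, pbr_neg_left, pbr_skew]
    ring

end PoissonCalc

/-- Let `P` be a compact Poisson manifold with
prequantizable symplectic groupoid `Γ` and prequantum groupoid `E ⇉ P`.
The Lie algebra of the group of Legendrian bisections of `E` is the Poisson
algebra `C^∞(P)`: explicitly, in the Lie algebroid
`Ã = T^*P ⊕ (P×ℝ)` with bracket
`[(ζ,f),(η,g)] = ([ζ,η], (π^♯ζ)g - (π^♯η)f + π(ζ,η))`, the sections of the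
form `(-df, f)` constitute a Lie subalgebra, and the map `(-df,f) ↦ -f` is
a Lie algebra isomorphism onto `(C^∞(P), {·,·})`. -/
theorem legendrian_bisections_lie_algebra
    {F V Ω1 Ω2 : Type*} [CommRing F] [Algebra ℝ F]
    [AddCommGroup V] [Module F V]
    [AddCommGroup Ω1] [Module ℝ Ω1] [Module F Ω1]
    [AddCommGroup Ω2] [Module ℝ Ω2]
    (C : PoissonCalc F V Ω1 Ω2) :
    -- the elements (-df, f) are closed under the bracket of Ã:
    -- [(-df,f),(-dg,g)] = (-dh, h) with h = -{f,g}
    (∀ f g : F,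
      C.extBr (-(C.d0 f), f) (-(C.d0 g), g) =
        (-(C.d0 (-(C.pbr f g))), -(C.pbr f g)))
    -- the map (-df, f) ↦ -f intertwines the bracket of Ã with the Poisson
    -- bracket: the image of [(-df,f),(-dg,g)] is {(-f),(-g)}
    ∧ (∀ f g : F,
        -((C.extBr (-(C.d0 f), f) (-(C.d0 g), g)).2) = C.pbr (-f) (-g))
    -- and f ↦ (-df, f) is a bijection of C^∞(P) onto the subalgebra
    -- {(ζ,f) : ζ = -df}, so (-df,f) ↦ -f is a Lie algebra isomorphism onto
    -- the Poisson algebra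
    ∧ Function.Bijective
        (fun f : F => (⟨(-(C.d0 f), f), rfl⟩ :
          {p : Ω1 × F // p.1 = -(C.d0 p.2)})) := by
  refine ⟨C.extBr_neg_d0, fun f g => ?_, fun f g h => congrArg (·.1.2) h, ?_⟩
  · rw [C.extBr_neg_d0, neg_neg, C.pbr_neg_neg]
  · rintro ⟨⟨ζ, f⟩, hζ⟩
    exact ⟨f, Subtype.ext (Prod.ext hζ.symm rfl)⟩
end
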